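/- arXiv:1702.00269 — 2 statements merged into one kernel-verified Lean document; each statement's English description precedes it below -/
import Mathlib

section
/- Suppose the refinable function φ is continuous on ℝ^s. If J ⊆ ℝ^s is an invariant subspace of M (i.e. MJ ⊆ J), then the subspace L = span{v(y) − v(x) : x, y ∈ G, y − x ∈ J} of ℝ^N is invariant under every transition matrix T_d, d ∈ D(M). -/
open Filter MeasureTheory Matrix Set

noncomputable section

/-- Cast of an integer vector to a real vector. -/
def icast {s : ℕ} (k : Fin s → ℤ) : Fin s → ℝ := fun j => (k j : ℝ)

/-- The Euclidean norm on `ι → ℝ`. -/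
def eNorm {ι : Type*} [Fintype ι] (u : ι → ℝ) : ℝ := Real.sqrt (∑ k, (u k) ^ 2)

/-- The set of products of length `k` of elements of the family `𝓑`. -/
def prodOfLen {A : Type*} [NormedRing A] (𝓑 : Set A) (k : ℕ) : Set A :=
  {P | ∃ f : Fin k → A, (∀ i, f i ∈ 𝓑) ∧ P = (List.ofFn f).prod}

/-- The joint spectral radius of a family `𝓑`:
`ρ(𝓑) = lim_{k→∞} max_{B₁,…,B_k ∈ 𝓑} ‖B₁⋯B_k‖^{1/k}` (the limit exists, hence
equals the `limsup`). -/
def jsr {A : Type*} [NormedRing A] (𝓑 : Set A) : ℝ :=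
  Filter.limsup
    (fun k : ℕ => sSup ((fun P : A => ‖P‖ ^ ((1 : ℝ) / (k : ℝ))) '' prodOfLen 𝓑 k))
    Filter.atTop

/-- The `p`-radius of a finite family `B : ι → A`:
`ρ_p = lim_{k→∞} (m^{-k} ∑ ‖B_{d₁}⋯B_{d_k}‖^p)^{1/(pk)}` (the limit exists, hence
equals the `limsup`). -/
def pRadius {A : Type*} [NormedRing A] {ι : Type*} [Fintype ι] (p : ℝ) (B : ι → A) : ℝ :=
  Filter.limsup
    (fun k : ℕ =>
      ((∑ f : Fin k → ι, ‖(List.ofFn fun i => B (f i)).prod‖ ^ p) / (Fintype.card ι : ℝ) ^ k)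
        ^ ((1 : ℝ) / (p * (k : ℝ))))
    Filter.atTop

/-- The resonance degree of a family `𝓑`: the least `ν` such that all products of
length `k` are bounded by `C ρ(𝓑)^k k^ν`. -/
def resDeg {A : Type*} [NormedRing A] (𝓑 : Set A) : ℕ :=
  sInf {ν : ℕ | ∃ C > 0, ∀ k : ℕ, 1 ≤ k → ∀ P ∈ prodOfLen 𝓑 k,
    ‖P‖ ≤ C * (jsr 𝓑) ^ k * (k : ℝ) ^ (ν : ℕ)}

/-- The attractor `G = {∑_{i≥1} M^{-i} d_i : d_i ∈ D}` of the dilation matrix `M`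
and the digit set `D`. -/
def Gset (s : ℕ) (M : Matrix (Fin s) (Fin s) ℤ) (D : Finset (Fin s → ℤ)) :
    Set (Fin s → ℝ) :=
  {x | ∃ f : ℕ → (Fin s → ℤ), (∀ i, f i ∈ D) ∧
    x = ∑' i : ℕ, (((M.map (Int.cast : ℤ → ℝ))⁻¹) ^ (i + 1)).mulVec (icast (f i))}

/-- `K = {∑_{j≥1} M^{-j} γ_j : γ_j ∈ supp c}`, carrying the support of the refinable
function. -/
def Kset (s : ℕ) (M : Matrix (Fin s) (Fin s) ℤ) (c : (Fin s → ℤ) → ℝ) :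
    Set (Fin s → ℝ) :=
  {x | ∃ γ : ℕ → (Fin s → ℤ), (∀ j, γ j ∈ Function.support c) ∧
    x = ∑' j : ℕ, (((M.map (Int.cast : ℤ → ℝ))⁻¹) ^ (j + 1)).mulVec (icast (γ j))}

/-- The transition matrix `T_d`, `(T_d)_{a,b} = c_{Ma - b + d}`, `a, b ∈ Ω`. -/
def Tmat (s : ℕ) (M : Matrix (Fin s) (Fin s) ℤ) (c : (Fin s → ℤ) → ℝ)
    (Ω : Finset (Fin s → ℤ)) (d : Fin s → ℤ) :
    Matrix {k // k ∈ Ω} {k // k ∈ Ω} ℝ :=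
  fun a b => c (M.mulVec a.1 - b.1 + d)

/-- The vector-valued function `v(x) = (φ(x+k))_{k ∈ Ω}`. -/
def vvec (s : ℕ) (Ω : Finset (Fin s → ℤ)) (φ : (Fin s → ℝ) → ℝ) (x : Fin s → ℝ) :
    {k // k ∈ Ω} → ℝ :=
  fun k => φ (x + icast k.1)

/-- The subspace `span{v(y) - v(x) : x, y ∈ G, y - x ∈ J}` of `ℝ^N`. -/
def Udiff (s : ℕ) (M : Matrix (Fin s) (Fin s) ℤ) (D : Finset (Fin s → ℤ))
    (Ω : Finset (Fin s → ℤ)) (φ : (Fin s → ℝ) → ℝ) (J : Submodule ℝ (Fin s → ℝ)) :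
    Submodule ℝ ({k // k ∈ Ω} → ℝ) :=
  Submodule.span ℝ {u | ∃ x ∈ Gset s M D, ∃ y ∈ Gset s M D, y - x ∈ J ∧
    u = vvec s Ω φ y - vvec s Ω φ x}

/-- The family of restrictions of the operators in `Ts` to a common invariant subspace
`U`, realized as continuous linear operators of `U`, characterized through their action. -/
def restrOps {ι : Type*} [Fintype ι] (Ts : Set ((ι → ℝ) →ₗ[ℝ] (ι → ℝ)))
    (U : Submodule ℝ (ι → ℝ)) : Set (↥U →L[ℝ] ↥U) :=
  {A | ∃ T ∈ Ts, ∀ u : U, (A u : ι → ℝ) = T u}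

/-- The Hölder exponent of `φ` (with the Euclidean norm). -/
def holderExp {s : ℕ} (φ : (Fin s → ℝ) → ℝ) : ℝ :=
  sSup {α : ℝ | 0 ≤ α ∧ ∃ C > 0, ∀ h x : Fin s → ℝ, |φ (x + h) - φ x| ≤ C * eNorm h ^ α}

/-- The Hölder exponent of `φ` along a linear subspace `J ⊆ ℝ^s`. -/
def holderExpAlong {s : ℕ} (J : Submodule ℝ (Fin s → ℝ)) (φ : (Fin s → ℝ) → ℝ) : ℝ :=
  sSup {α : ℝ | 0 ≤ α ∧ ∃ C > 0, ∀ h ∈ J, ∀ x : Fin s → ℝ,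
    |φ (x + h) - φ x| ≤ C * eNorm h ^ α}

/-- The local Hölder exponent of a vector-valued function `f` at the point `x₀` along a
subspace `J ⊆ ℝ^s`. -/
def locHolderAlong {s : ℕ} {ι : Type*} [Fintype ι] (f : (Fin s → ℝ) → (ι → ℝ))
    (x₀ : Fin s → ℝ) (J : Submodule ℝ (Fin s → ℝ)) : ℝ :=
  sSup {α : ℝ | 0 ≤ α ∧ ∃ C > 0, ∀ h ∈ J, eNorm (f (x₀ + h) - f x₀) ≤ C * eNorm h ^ α}

/-- The `L_p` Hölder exponent of `φ`. -/
def holderExpLp {s : ℕ} (p : ℝ) (φ : (Fin s → ℝ) → ℝ) : ℝ :=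
  sSup {α : ℝ | 0 ≤ α ∧ ∃ C > 0, ∀ h : Fin s → ℝ,
    eLpNorm (fun x => φ (x + h) - φ x) (ENNReal.ofReal p) volume ≤
      ENNReal.ofReal (C * eNorm h ^ α)}

/-- The `L_p` Hölder exponent of `φ` along a linear subspace `J ⊆ ℝ^s`. -/
def holderExpAlongLp {s : ℕ} (p : ℝ) (J : Submodule ℝ (Fin s → ℝ))
    (φ : (Fin s → ℝ) → ℝ) : ℝ :=
  sSup {α : ℝ | 0 ≤ α ∧ ∃ C > 0, ∀ h ∈ J,
    eLpNorm (fun x => φ (x + h) - φ x) (ENNReal.ofReal p) volume ≤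
      ENNReal.ofReal (C * eNorm h ^ α)}

/-- The affine map `M_d^{-1} x = M^{-1}(x + d)`. -/
def invStep (s : ℕ) (Minv : Matrix (Fin s) (Fin s) ℝ) (d : Fin s → ℤ)
    (x : Fin s → ℝ) : Fin s → ℝ :=
  Minv.mulVec (x + icast d)

/-- The composition `M_{dig a}^{-1} ∘ M_{dig (a+1)}^{-1} ∘ ⋯ ∘ M_{dig (a+n-1)}^{-1}`. -/
def compRange (s : ℕ) (Minv : Matrix (Fin s) (Fin s) ℝ) (dig : ℕ → (Fin s → ℤ)) :
    ℕ → ℕ → (Fin s → ℝ) → (Fin s → ℝ)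
  | _, 0 => id
  | a, n + 1 => invStep s Minv (dig a) ∘ compRange s Minv dig (a + 1) n

/-- The subdivision operator `(Sa)_i = ∑_j c_{i - Mj} a_j`. -/
def subdivOp (s : ℕ) (c : (Fin s → ℤ) → ℝ) (M : Matrix (Fin s) (Fin s) ℤ)
    (a : (Fin s → ℤ) → ℝ) : (Fin s → ℤ) → ℝ :=
  fun i => ∑ᶠ j : Fin s → ℤ, c (i - M.mulVec j) * a j

/-- The linear functional `w ↦ ∑ k, w k`. -/
def sumFunctional (ι : Type*) [Fintype ι] : (ι → ℝ) →ₗ[ℝ] ℝ where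
  toFun w := ∑ k, w k
  map_add' := by intros; simp [Finset.sum_add_distrib]
  map_smul' := by intros; simp [Finset.mul_sum]

/-- The family `𝒯 = {T_d : d ∈ D}` of transition operators. -/
def Tfam (s : ℕ) (M : Matrix (Fin s) (Fin s) ℤ) (c : (Fin s → ℤ) → ℝ)
    (Ω D : Finset (Fin s → ℤ)) :
    Set (({k // k ∈ Ω} → ℝ) →ₗ[ℝ] ({k // k ∈ Ω} → ℝ)) :=
  {T | ∃ d ∈ D, T = (Tmat s M c Ω d).mulVecLin}

/-- The minimal common invariant subspace of the transition operators containing the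
vectors `T_d w - w`, `d ∈ D`. -/
def minInvSub (s : ℕ) (M : Matrix (Fin s) (Fin s) ℤ) (c : (Fin s → ℤ) → ℝ)
    (Ω D : Finset (Fin s → ℤ)) (w : {k // k ∈ Ω} → ℝ) :
    Submodule ℝ ({k // k ∈ Ω} → ℝ) :=
  sInf {U' | (∀ d ∈ D, ∀ u ∈ U', (Tmat s M c Ω d).mulVecLin u ∈ U') ∧
    (∀ d ∈ D, (Tmat s M c Ω d).mulVecLin w - w ∈ U')}

/-- The complexification of a real subspace of `ℝ^s` inside `ℂ^s`. -/
def csub {s : ℕ} (J : Submodule ℝ (Fin s → ℝ)) : Submodule ℂ (Fin s → ℂ) :=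
  Submodule.span ℂ ((fun x (j : Fin s) => ((x j : ℝ) : ℂ)) '' (J : Set (Fin s → ℝ)))


/-!
For `x ∈ G` and `d ∈ D` the refinement equation gives `T_d v(x) = v(M⁻¹(x + d))`, as soon as
`φ(x + b) = 0` for every `b ∉ Ω`. This vanishing is where the hypotheses meet: `supp φ ⊆ K ⊆ Ω + G`,
so if `φ(x + b) ≠ 0` then, by continuity of `φ` and since `G` is the closure of its interior, a
nonempty open subset of `G` would lie in translates `G + m` with `0 ≠ m ∈ ℤ^s`. But `G + ℤ^s = ℝ^s`
and `|G| = 1`, so `G` is a fundamental domain of `ℤ^s` up to null sets and such overlaps are null.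
Hence `T_d (v(y) - v(x)) = v(M⁻¹(y + d)) - v(M⁻¹(x + d))`, where `M⁻¹(x + d), M⁻¹(y + d) ∈ G` and
`M⁻¹(y - x) ∈ J` because `M` maps the finite-dimensional space `J` injectively into itself.
-/

open scoped NNReal ENNReal Topology Pointwise

attribute [local instance] Matrix.linftyOpNormedAddCommGroup Matrix.linftyOpNormedRing
  Matrix.linftyOpNormedAlgebra

section IntegerVectors

variable {s : ℕ}

@[simp] lemma icast_apply (k : Fin s → ℤ) (j : Fin s) : icast k j = k j := rfl

@[simp] lemma icast_zero : icast (0 : Fin s → ℤ) = 0 := by ext; simp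

@[simp] lemma icast_add (a b : Fin s → ℤ) : icast (a + b) = icast a + icast b := by ext; simp

@[simp] lemma icast_sub (a b : Fin s → ℤ) : icast (a - b) = icast a - icast b := by ext; simp

lemma isClosed_range_icast : IsClosed (range (icast : (Fin s → ℤ) → Fin s → ℝ)) := by
  have : range (icast : (Fin s → ℤ) → Fin s → ℝ) = univ.pi fun _ => range ((↑) : ℤ → ℝ) := by
    ext x
    simp only [mem_range, mem_univ_pi, funext_iff, icast_apply]
    exact ⟨fun ⟨k, hk⟩ j => ⟨k j, hk j⟩,
      fun h => ⟨fun j => (h j).choose, fun j => (h j).choose_spec⟩⟩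
  rw [this]
  exact isClosed_set_pi fun _ _ => Real.isClosed_range_intCast

abbrev rmat (M : Matrix (Fin s) (Fin s) ℤ) : Matrix (Fin s) (Fin s) ℝ := M.map (Int.cast : ℤ → ℝ)

lemma icast_mulVec (M : Matrix (Fin s) (Fin s) ℤ) (k : Fin s → ℤ) :
    icast (M *ᵥ k) = rmat M *ᵥ icast k := by
  ext j
  simp [Matrix.mulVec, dotProduct]

end IntegerVectors

lemma summable_norm_pow_of_spectrum_norm_lt_one {A : Type*} [NormedRing A] [NormedAlgebra ℂ A]
    [CompleteSpace A] (a : A) (ha : ∀ z ∈ spectrum ℂ a, ‖z‖ < 1) : Summable fun n => ‖a ^ n‖ := by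
  cases subsingleton_or_nontrivial A
  · simp [Subsingleton.elim _ (0 : A)]
  obtain ⟨r, hρr, hr1⟩ := ENNReal.lt_iff_exists_nnreal_btwn.mp
    (spectrum.spectralRadius_lt_of_forall_lt a (r := 1) fun z hz => by exact_mod_cast ha z hz)
  have hr1 : (r : ℝ) < 1 := by exact_mod_cast hr1
  refine summable_of_isBigO_nat' (summable_geometric_of_lt_one r.2 hr1)
    (Asymptotics.IsBigO.of_bound' ?_)
  filter_upwards [(spectrum.pow_norm_pow_one_div_tendsto_nhds_spectralRadius a).eventually_lt_const
    hρr, eventually_gt_atTop 0] with n hn hn0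
  rw [ENNReal.ofReal_lt_iff_lt_toReal (by positivity) ENNReal.coe_ne_top, ENNReal.coe_toReal,
    one_div] at hn
  have := (Real.rpow_inv_lt_iff_of_pos (norm_nonneg _) r.2 (Nat.cast_pos.mpr hn0)).mp hn
  rw [Real.norm_of_nonneg (norm_nonneg _), Real.norm_of_nonneg (pow_nonneg r.2 n)]
  exact_mod_cast this.le

lemma Matrix.linfty_opNorm_map_ofReal {m n : Type*} [Fintype m] [Fintype n] (A : Matrix m n ℝ) :
    ‖A.map ((↑) : ℝ → ℂ)‖ = ‖A‖ := by
  simp [Matrix.linfty_opNorm_def]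

section Expansive

variable {s : ℕ} {M : Matrix (Fin s) (Fin s) ℤ}

lemma isUnit_det_rmat (hM : M.det ≠ 0) : IsUnit (rmat M).det := by
  rw [show rmat M = (Int.castRingHom ℝ).mapMatrix M from rfl, ← RingHom.map_det]
  exact (Int.cast_ne_zero.mpr hM).isUnit

variable (hMexp : ∀ μ ∈ spectrum ℂ (M.map (fun a => (a : ℂ))), 1 < ‖μ‖)
include hMexp

lemma det_ne_zero_of_expansive : M.det ≠ 0 := by
  intro h
  have : ¬IsUnit (M.map (fun a => (a : ℂ))) := by
    rw [Matrix.isUnit_iff_isUnit_det,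
      show M.map (fun a => (a : ℂ)) = (Int.castRingHom ℂ).mapMatrix M from rfl, ← RingHom.map_det,
      h, map_zero]
    exact not_isUnit_zero
  have := hMexp 0 (spectrum.zero_mem_iff ℂ |>.mpr this)
  norm_num at this

lemma summable_norm_inv_pow_rmat : Summable fun n => ‖(rmat M)⁻¹ ^ n‖ := by
  have hdet := isUnit_det_rmat (det_ne_zero_of_expansive hMexp)
  set Mc : Matrix (Fin s) (Fin s) ℂ := M.map (fun a => (a : ℂ))
  set Bc : Matrix (Fin s) (Fin s) ℂ := Complex.ofRealHom.mapMatrix (rmat M)⁻¹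
  have hBc : Bc * Mc = 1 := by
    have h := congrArg Complex.ofRealHom.mapMatrix (Matrix.nonsing_inv_mul _ hdet)
    rwa [map_mul, map_one, show Complex.ofRealHom.mapMatrix (rmat M) = Mc by ext; simp [Mc]] at h
  have hMc : IsUnit Mc :=
    (Matrix.isUnit_iff_isUnit_det _).mpr (Matrix.isUnit_det_of_left_inverse hBc)
  have hspec : ∀ z ∈ spectrum ℂ Bc, ‖z‖ < 1 := by
    intro z hz
    rw [← Matrix.inv_eq_left_inv hBc, ← hMc.unit_spec, ← Matrix.coe_units_inv,
      ← spectrum.map_inv, Set.mem_inv] at hz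
    have := hMexp _ hz
    rw [norm_inv, one_lt_inv_iff₀] at this
    exact this.2
  refine (summable_norm_pow_of_spectrum_norm_lt_one Bc hspec).congr fun n => ?_
  rw [← map_pow]
  exact Matrix.linfty_opNorm_map_ofReal _

end Expansive

section Attractor

variable {s : ℕ} {M : Matrix (Fin s) (Fin s) ℤ} {S : Finset (Fin s → ℤ)}

/-- `Gset s M S` is by definition the set of the `digitSum M f` with all digits `f i ∈ S`. -/
def digitSum (M : Matrix (Fin s) (Fin s) ℤ) (f : ℕ → Fin s → ℤ) : Fin s → ℝ :=
  ∑' i, ((rmat M)⁻¹ ^ (i + 1)) *ᵥ icast (f i)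

lemma invStep_sub_invStep (A : Matrix (Fin s) (Fin s) ℝ) (d : Fin s → ℤ) (x y : Fin s → ℝ) :
    invStep s A d x - invStep s A d y = A *ᵥ (x - y) := by
  simp [invStep, ← Matrix.mulVec_sub]

lemma rmat_mulVec_invStep (hdet : IsUnit (rmat M).det) (d : Fin s → ℤ) (x : Fin s → ℝ) :
    rmat M *ᵥ invStep s (rmat M)⁻¹ d x = x + icast d := by
  rw [invStep, Matrix.mulVec_mulVec, Matrix.mul_nonsing_inv _ hdet, Matrix.one_mulVec]

lemma invStep_rmat_mulVec_sub (hdet : IsUnit (rmat M).det) (d : Fin s → ℤ) (y : Fin s → ℝ) :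
    invStep s (rmat M)⁻¹ d (rmat M *ᵥ y - icast d) = y := by
  rw [invStep, sub_add_cancel, Matrix.mulVec_mulVec, Matrix.nonsing_inv_mul _ hdet,
    Matrix.one_mulVec]

lemma exists_norm_icast_le (S : Finset (Fin s → ℤ)) : ∃ B, ∀ k ∈ S, ‖icast k‖ ≤ B :=
  ⟨∑ k ∈ S, ‖icast k‖, fun _ hk => Finset.single_le_sum (fun _ _ => norm_nonneg _) hk⟩

lemma Gset_nonempty (hS : S.Nonempty) : (Gset s M S).Nonempty :=
  ⟨_, fun _ => hS.choose, fun _ => hS.choose_spec, rfl⟩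

lemma zero_mem_Gset (hS : (0 : Fin s → ℤ) ∈ S) : (0 : Fin s → ℝ) ∈ Gset s M S :=
  ⟨fun _ => 0, fun _ => hS, by simp⟩

variable (hsum : Summable fun n => ‖(rmat M)⁻¹ ^ n‖)
include hsum

lemma tendsto_inv_pow_mulVec_zero_of_bounded {z : ℕ → Fin s → ℝ} {R : ℝ} (hz : ∀ n, ‖z n‖ ≤ R) :
    Tendsto (fun n => ((rmat M)⁻¹ ^ n) *ᵥ z n) atTop (𝓝 0) :=
  squeeze_zero_norm
    (fun n => (Matrix.linfty_opNorm_mulVec _ _).trans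
      (mul_le_mul_of_nonneg_left (hz n) (norm_nonneg _)))
    (by simpa using hsum.tendsto_atTop_zero.mul_const R)

lemma summable_digitSum {f : ℕ → Fin s → ℤ} {B : ℝ} (hf : ∀ i, ‖icast (f i)‖ ≤ B) :
    Summable fun i => ((rmat M)⁻¹ ^ (i + 1)) *ᵥ icast (f i) :=
  Summable.of_norm_bounded (((summable_nat_add_iff 1).mpr hsum).mul_right B)
    fun i => (Matrix.linfty_opNorm_mulVec _ _).trans
      (mul_le_mul_of_nonneg_left (hf i) (norm_nonneg _))

lemma digitSum_eq_invStep {f : ℕ → Fin s → ℤ} {B : ℝ} (hf : ∀ i, ‖icast (f i)‖ ≤ B) :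
    digitSum M f = invStep s (rmat M)⁻¹ (f 0) (digitSum M fun i => f (i + 1)) := by
  have htail := ((summable_digitSum hsum fun i => hf (i + 1)).hasSum.map
    (Matrix.mulVecLin (rmat M)⁻¹) (Continuous.matrix_mulVec continuous_const continuous_id)).tsum_eq
  simp only [Function.comp_def, Matrix.mulVecLin_apply, Matrix.mulVec_mulVec, ← pow_succ'] at htail
  rw [digitSum, (summable_digitSum hsum hf).tsum_eq_zero_add, htail, invStep, digitSum,
    Matrix.mulVec_add, add_comm, zero_add, pow_one]

lemma invStep_mem_Gset {d : Fin s → ℤ} (hd : d ∈ S) {x : Fin s → ℝ} (hx : x ∈ Gset s M S) :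
    invStep s (rmat M)⁻¹ d x ∈ Gset s M S := by
  obtain ⟨f, hf, rfl⟩ := hx
  obtain ⟨B, hB⟩ := exists_norm_icast_le S
  let g : ℕ → Fin s → ℤ := fun | 0 => d | i + 1 => f i
  have hg : ∀ i, g i ∈ S := fun | 0 => hd | i + 1 => hf i
  exact ⟨g, hg, (digitSum_eq_invStep hsum fun i => hB _ (hg i)).symm⟩

lemma exists_eq_invStep_of_mem_Gset {x : Fin s → ℝ} (hx : x ∈ Gset s M S) :
    ∃ d ∈ S, ∃ y ∈ Gset s M S, x = invStep s (rmat M)⁻¹ d y := by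
  obtain ⟨f, hf, rfl⟩ := hx
  obtain ⟨B, hB⟩ := exists_norm_icast_le S
  exact ⟨f 0, hf 0, _, ⟨_, fun i => hf (i + 1), rfl⟩,
    digitSum_eq_invStep hsum fun i => hB _ (hf i)⟩

lemma isCompact_Gset (S : Finset (Fin s → ℤ)) : IsCompact (Gset s M S) := by
  obtain ⟨B, hB⟩ := exists_norm_icast_le S
  have hrange : Gset s M S = range fun f : ℕ → S => digitSum M fun i => f i := by
    ext x
    constructor
    · rintro ⟨f, hf, rfl⟩
      exact ⟨fun i => ⟨f i, hf i⟩, rfl⟩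
    · rintro ⟨f, rfl⟩
      exact ⟨_, fun i => (f i).2, rfl⟩
  rw [hrange]
  refine isCompact_range <| continuous_tsum (fun i => ?_)
    (((summable_nat_add_iff 1).mpr hsum).mul_right B) fun i f => ?_
  · exact (continuous_of_discreteTopology
      (f := fun k : S => ((rmat M)⁻¹ ^ (i + 1)) *ᵥ icast (k : Fin s → ℤ))).comp (continuous_apply i)
  · exact (Matrix.linfty_opNorm_mulVec _ _).trans
      (mul_le_mul_of_nonneg_left (hB _ (f i).2) (norm_nonneg _))

/-- The same `n` inverse steps, applied to a point of `P` and to a point of `Q`, leave them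
`M⁻ⁿ`-close. -/
lemma subset_closure_of_forall_eq_invStep {P Q : Set (Fin s → ℝ)} {R : ℝ}
    (hPR : ∀ y ∈ P, ‖y‖ ≤ R)
    (hP : ∀ y ∈ P, ∃ d ∈ S, ∃ y' ∈ P, y = invStep s (rmat M)⁻¹ d y')
    (hQ : ∀ d ∈ S, ∀ q ∈ Q, invStep s (rmat M)⁻¹ d q ∈ Q) {q₀ : Fin s → ℝ} (hq₀ : q₀ ∈ Q) :
    P ⊆ closure Q := by
  have key : ∀ n, ∀ x ∈ P, ∃ q ∈ Q, ∃ z, ‖z‖ ≤ R + ‖q₀‖ ∧ x - q = ((rmat M)⁻¹ ^ n) *ᵥ z := by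
    intro n
    induction n with
    | zero =>
      intro x hx
      exact ⟨q₀, hq₀, x - q₀, (norm_sub_le _ _).trans (by linarith [hPR x hx]), by simp⟩
    | succ n ih =>
      intro x hx
      obtain ⟨d, hd, x', hx', rfl⟩ := hP x hx
      obtain ⟨q, hq, z, hz, hxq⟩ := ih x' hx'
      refine ⟨_, hQ d hd q hq, z, hz, ?_⟩
      rw [invStep_sub_invStep, hxq, Matrix.mulVec_mulVec, pow_succ']
  intro x hx
  choose q hq z hz hxq using fun n => key n x hx
  have hlim : Tendsto q atTop (𝓝 x) := by
    have := (tendsto_const_nhds (x := x)).sub (tendsto_inv_pow_mulVec_zero_of_bounded hsum hz)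
    rw [sub_zero] at this
    exact this.congr fun n => by rw [← hxq, sub_sub_cancel]
  exact mem_closure_of_tendsto hlim (Eventually.of_forall hq)

end Attractor

lemma Kset_eq_Gset {s : ℕ} {M : Matrix (Fin s) (Fin s) ℤ} {c : (Fin s → ℤ) → ℝ}
    (hcfin : (Function.support c).Finite) : Kset s M c = Gset s M hcfin.toFinset := by
  ext x
  simp only [Kset, Gset, Set.Finite.mem_toFinset]

section Tiling

variable {s : ℕ} {M : Matrix (Fin s) (Fin s) ℤ} {S : Finset (Fin s → ℤ)}
  (hdet : IsUnit (rmat M).det) (hsum : Summable fun n => ‖(rmat M)⁻¹ ^ n‖)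
include hdet hsum

/-- `G + ℤ^s` is closed, contains `ℤ^s` and is stable under `M⁻¹`, hence contains the dense set
`⋃ₙ M⁻ⁿ ℤ^s`. -/
lemma exists_sub_icast_mem_Gset (hS0 : (0 : Fin s → ℤ) ∈ S)
    (hSrep : ∀ x : Fin s → ℤ, ∃! d, d ∈ S ∧ ∃ y : Fin s → ℤ, x = d + M *ᵥ y) (y : Fin s → ℝ) :
    ∃ k, y - icast k ∈ Gset s M S := by
  set T := Gset s M S + range icast
  have hT : IsClosed T := isClosed_range_icast.add_left_of_isCompact (isCompact_Gset hsum S)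
  have hinv : ∀ x ∈ T, (rmat M)⁻¹ *ᵥ x ∈ T := by
    rintro _ ⟨g, hg, _, ⟨k, rfl⟩, rfl⟩
    obtain ⟨d, ⟨hd, k', rfl⟩, -⟩ := hSrep k
    refine ⟨_, invStep_mem_Gset hsum hd hg, _, ⟨k', rfl⟩, ?_⟩
    dsimp only
    rw [invStep, icast_add, icast_mulVec, ← add_assoc, Matrix.mulVec_add (rmat M)⁻¹ (g + icast d),
      Matrix.mulVec_mulVec, Matrix.nonsing_inv_mul _ hdet, Matrix.one_mulVec]
  have hpow : ∀ n k, ((rmat M)⁻¹ ^ n) *ᵥ icast k ∈ T := by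
    intro n k
    induction n with
    | zero => exact ⟨0, zero_mem_Gset hS0, _, ⟨k, rfl⟩, by simp⟩
    | succ n ih => simpa [pow_succ', ← Matrix.mulVec_mulVec] using hinv _ ih
  set k : ℕ → Fin s → ℤ := fun n j => ⌊(rmat M ^ n *ᵥ y) j⌋
  have hfract : ∀ n, ‖rmat M ^ n *ᵥ y - icast (k n)‖ ≤ 1 := fun n =>
    (pi_norm_le_iff_of_nonneg zero_le_one).mpr fun j => by
      change |(rmat M ^ n *ᵥ y) j - ⌊(rmat M ^ n *ᵥ y) j⌋| ≤ 1
      rw [Int.self_sub_floor, abs_of_nonneg (Int.fract_nonneg _)]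
      exact (Int.fract_lt_one _).le
  have hlim : Tendsto (fun n => ((rmat M)⁻¹ ^ n) *ᵥ icast (k n)) atTop (𝓝 y) := by
    have := (tendsto_const_nhds (x := y)).sub (tendsto_inv_pow_mulVec_zero_of_bounded hsum hfract)
    rw [sub_zero] at this
    refine this.congr fun n => ?_
    rw [Matrix.mulVec_sub, Matrix.mulVec_mulVec, Matrix.inv_pow', Matrix.nonsing_inv_mul _
      (by rw [Matrix.det_pow]; exact hdet.pow n), Matrix.one_mulVec, sub_sub_cancel,
      ← Matrix.inv_pow']
  obtain ⟨g, hg, _, ⟨k, rfl⟩, hy⟩ := hT.mem_of_tendsto hlim (Eventually.of_forall fun n => hpow n _)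
  exact ⟨k, by rwa [← hy, add_sub_cancel_right]⟩

lemma invStep_mem_interior_Gset {d : Fin s → ℤ} (hd : d ∈ S) {x : Fin s → ℝ}
    (hx : x ∈ interior (Gset s M S)) : invStep s (rmat M)⁻¹ d x ∈ interior (Gset s M S) := by
  refine mem_interior.mpr ⟨{y | rmat M *ᵥ y - icast d ∈ interior (Gset s M S)}, fun y hy => ?_,
    isOpen_interior.preimage ((Continuous.matrix_mulVec continuous_const continuous_id).sub
      continuous_const), by simpa [rmat_mulVec_invStep hdet] using hx⟩
  rw [← invStep_rmat_mulVec_sub hdet d y]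
  exact invStep_mem_Gset hsum hd (interior_subset hy)

lemma Gset_subset_closure_interior (hne : (interior (Gset s M S)).Nonempty) :
    Gset s M S ⊆ closure (interior (Gset s M S)) := by
  obtain ⟨R, hR⟩ := (isCompact_Gset hsum S).isBounded.exists_norm_le
  exact subset_closure_of_forall_eq_invStep hsum hR
    (fun _ hy => exists_eq_invStep_of_mem_Gset hsum hy)
    (fun _ hd _ hq => invStep_mem_interior_Gset hdet hsum hd hq) hne.some_mem

lemma support_subset_Kset {c : (Fin s → ℤ) → ℝ} (hcfin : (Function.support c).Finite)
    {φ : (Fin s → ℝ) → ℝ} (hφc : HasCompactSupport φ)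
    (hφeq : ∀ x, φ x = ∑ᶠ k : Fin s → ℤ, c k * φ ((M.map (Int.cast : ℤ → ℝ)).mulVec x - icast k)) :
    Function.support φ ⊆ Kset s M c := by
  have hstep : ∀ y ∈ Function.support φ, ∃ γ ∈ hcfin.toFinset, ∃ y' ∈ Function.support φ,
      y = invStep s (rmat M)⁻¹ γ y' := by
    intro y hy
    obtain ⟨γ, hγ⟩ : ∃ γ, c γ * φ (rmat M *ᵥ y - icast γ) ≠ 0 := by
      by_contra! h
      exact hy ((hφeq y).trans (finsum_eq_zero_of_forall_eq_zero h))
    exact ⟨γ, hcfin.mem_toFinset.mpr (left_ne_zero_of_mul hγ), _, right_ne_zero_of_mul hγ,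
      (invStep_rmat_mulVec_sub hdet γ y).symm⟩
  intro x hx
  obtain ⟨γ, hγ, -⟩ := hstep x hx
  obtain ⟨R, hR⟩ := hφc.isCompact.isBounded.exists_norm_le
  rw [Kset_eq_Gset hcfin, ← (isCompact_Gset hsum _).isClosed.closure_eq]
  exact subset_closure_of_forall_eq_invStep hsum (fun y hy => hR y (subset_tsupport φ hy)) hstep
    (fun _ hd _ hq => invStep_mem_Gset hsum hd hq) (Gset_nonempty ⟨γ, hγ⟩).some_mem hx

end Tiling

lemma interior_nonempty_of_forall_exists_sub_icast_mem {s : ℕ} {F : Set (Fin s → ℝ)}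
    (hF : IsClosed F) (hcov : ∀ y, ∃ k, y - icast k ∈ F) : (interior F).Nonempty := by
  obtain ⟨k, hk⟩ := nonempty_interior_of_iUnion_of_closed
    (fun k : Fin s → ℤ => hF.preimage (continuous_sub_right (icast k)))
    (iUnion_eq_univ_iff.mpr hcov)
  change (interior (Homeomorph.subRight (icast k) ⁻¹' F)).Nonempty at hk
  rw [← Homeomorph.preimage_interior] at hk
  exact ⟨_, hk.some_mem⟩

/-- The number `N x` of translates of `x` lying in `s` is `≥ 1` and has integral `μ s = μ t` over
`t`, so `N = 1` a.e. on `t`; a translate of a point of `s ∩ (g +ᵥ s)` would be counted twice. -/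
theorem MeasureTheory.IsAddFundamentalDomain.measure_inter_vadd_eq_zero_of_covers
    {G α : Type*} [AddGroup G] [Countable G] [AddAction G α] [MeasurableSpace α]
    [MeasurableConstVAdd G α] {μ : Measure α} [VAddInvariantMeasure G α μ] {s t : Set α}
    (ht : IsAddFundamentalDomain G t μ) (hs : MeasurableSet s) (hcov : ∀ x, ∃ g : G, g +ᵥ x ∈ s)
    (hμ : μ s = μ t) (hfin : μ t ≠ ∞) {g : G} (hg : g ≠ 0) : μ (s ∩ (g +ᵥ s)) = 0 := by
  have hmeas : ∀ u : Set α, MeasurableSet u → ∀ h : G,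
      Measurable fun x => u.indicator (1 : α → ℝ≥0∞) (h +ᵥ x) :=
    fun u hu h => (measurable_one.indicator hu).comp (measurable_const_vadd h)
  have hcount : ∀ u : Set α, MeasurableSet u →
      μ u = ∫⁻ x in t, ∑' h : G, u.indicator (1 : α → ℝ≥0∞) (h +ᵥ x) ∂μ := fun u hu => by
    rw [← lintegral_indicator_one hu, ht.lintegral_eq_tsum'',
      lintegral_tsum fun h => (hmeas u hu h).aemeasurable]
  set N : α → ℝ≥0∞ := fun x => ∑' h : G, s.indicator (1 : α → ℝ≥0∞) (h +ᵥ x)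
  have hN : ∀ᵐ x ∂μ.restrict t, 1 = N x := by
    refine ae_eq_of_ae_le_of_lintegral_le (Eventually.of_forall fun x => ?_) (by simpa using hfin)
      (Measurable.tsum (hmeas s hs)).aemeasurable (by simp [N, ← hcount s hs, hμ])
    obtain ⟨h, hh⟩ := hcov x
    simpa [hh] using ENNReal.le_tsum (f := fun h : G => s.indicator 1 (h +ᵥ x)) h
  rw [hcount _ (hs.inter (hs.const_vadd g))]
  refine (lintegral_congr_ae ?_).trans lintegral_zero
  filter_upwards [hN] with x hx
  refine ENNReal.tsum_eq_zero.mpr fun h => indicator_of_notMem (fun hh => ?_) _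
  obtain ⟨h₁, h₂⟩ := hh
  rw [mem_vadd_set_iff_neg_vadd_mem, vadd_vadd] at h₂
  have hne : h ≠ -g + h := by simpa [eq_comm] using hg
  have : (2 : ℝ≥0∞) ≤ N x := by
    classical
    calc (2 : ℝ≥0∞) = ∑ h' ∈ {h, -g + h}, s.indicator 1 (h' +ᵥ x) := by
          simp [Finset.sum_pair hne, h₁, h₂, one_add_one_eq_two]
      _ ≤ N x := ENNReal.sum_le_tsum _
  rw [← hx] at this
  norm_num at this

lemma volume_inter_sub_icast_eq_zero {s : ℕ} {F : Set (Fin s → ℝ)} (hF : MeasurableSet F)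
    (hvol : volume F = 1) (hcov : ∀ y, ∃ k, y - icast k ∈ F) {m : Fin s → ℤ} (hm : m ≠ 0) :
    volume {y | y ∈ F ∧ y - icast m ∈ F} = 0 := by
  set Λ := (Submodule.span ℤ (range (Pi.basisFun ℝ (Fin s)))).toAddSubgroup
  have hmem : ∀ k : Fin s → ℤ, icast k ∈ Λ := fun k =>
    ((Pi.basisFun ℝ (Fin s)).mem_span_iff_repr_mem ℤ _).mpr fun i => ⟨k i, by simp⟩
  have : Countable Λ := inferInstanceAs (Countable (Submodule.span ℤ _))
  have hdom := ZSpan.isAddFundamentalDomain' (Pi.basisFun ℝ (Fin s)) volume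
  have hdom_vol : volume (ZSpan.fundamentalDomain (Pi.basisFun ℝ (Fin s))) = 1 := by
    simp [ZSpan.fundamentalDomain_pi_basisFun, volume_pi_pi]
  have hm' : (⟨icast m, hmem m⟩ : Λ) ≠ 0 := fun h => hm (by
    ext j; simpa using congrFun (congrArg Subtype.val h) j)
  have hcov' : ∀ y, ∃ g : Λ, g +ᵥ y ∈ F := fun y => by
    obtain ⟨k, hk⟩ := hcov y
    exact ⟨⟨-icast k, neg_mem (hmem k)⟩, by simpa [AddSubgroup.vadd_def, neg_add_eq_sub] using hk⟩
  convert hdom.measure_inter_vadd_eq_zero_of_covers hF hcov' (by rw [hvol, hdom_vol])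
    (by simp [hdom_vol]) hm' using 2
  ext y
  simp [mem_vadd_set_iff_neg_vadd_mem, AddSubgroup.vadd_def, neg_add_eq_sub]

lemma apply_add_icast_eq_zero_of_notMem {s : ℕ} {G : Set (Fin s → ℝ)} {φ : (Fin s → ℝ) → ℝ}
    (hcont : Continuous φ) {Ω : Finset (Fin s → ℤ)}
    (hsupp : Function.support φ ⊆ ⋃ k ∈ Ω, (fun g => icast k + g) '' G)
    (hG : G ⊆ closure (interior G))
    (hnull : ∀ m : Fin s → ℤ, m ≠ 0 → volume {y | y ∈ G ∧ y - icast m ∈ G} = 0)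
    {x : Fin s → ℝ} (hx : x ∈ G) {b : Fin s → ℤ} (hb : b ∉ Ω) : φ (x + icast b) = 0 := by
  by_contra hxb
  set U := {y | φ (y + icast b) ≠ 0}
  have hU : IsOpen U := isOpen_ne_fun (hcont.comp (continuous_add_const _)) continuous_const
  have hpos : 0 < volume (U ∩ interior G) :=
    (hU.inter isOpen_interior).measure_pos _ (mem_closure_iff.mp (hG hx) U hU hxb)
  have hsub : U ∩ interior G ⊆ ⋃ k ∈ (Ω : Set (Fin s → ℤ)),
      {y | y ∈ G ∧ y - icast (k - b) ∈ G} := by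
    rintro y ⟨hyU, hyG⟩
    obtain ⟨k, hk, g, hg, hkg⟩ := mem_iUnion₂.mp (hsupp hyU)
    refine mem_iUnion₂.mpr ⟨k, hk, interior_subset hyG, ?_⟩
    rwa [icast_sub, sub_sub_eq_add_sub, ← hkg, add_sub_cancel_left]
  refine hpos.ne' (measure_mono_null hsub ((measure_biUnion_null_iff Ω.countable_toSet).mpr
    fun k hk => hnull _ (sub_ne_zero.mpr ?_)))
  rintro rfl
  exact hb hk

lemma apply_invStep_add_icast_eq_sum {s : ℕ} {M : Matrix (Fin s) (Fin s) ℤ}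
    (hdet : IsUnit (rmat M).det) {c : (Fin s → ℤ) → ℝ} {φ : (Fin s → ℝ) → ℝ}
    (hφeq : ∀ x, φ x = ∑ᶠ k : Fin s → ℤ, c k * φ ((M.map (Int.cast : ℤ → ℝ)).mulVec x - icast k))
    {Ω : Finset (Fin s → ℤ)} {x : Fin s → ℝ} (hvanish : ∀ b ∉ Ω, φ (x + icast b) = 0)
    (a d : Fin s → ℤ) :
    φ (invStep s (rmat M)⁻¹ d x + icast a) = ∑ b ∈ Ω, c (M *ᵥ a - b + d) * φ (x + icast b) := by
  have harg : ∀ b, rmat M *ᵥ (invStep s (rmat M)⁻¹ d x + icast a) - icast (M *ᵥ a + d - b) =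
      x + icast b := fun b => by
    rw [Matrix.mulVec_add, rmat_mulVec_invStep hdet, ← icast_mulVec]
    simp only [icast_add, icast_sub]
    abel
  rw [hφeq, ← finsum_comp_equiv (Equiv.subLeft (M *ᵥ a + d))]
  simp only [Equiv.subLeft_apply, harg]
  rw [finsum_eq_sum_of_support_subset _ fun b hb => ?_]
  · exact Finset.sum_congr rfl fun b _ => by rw [show M *ᵥ a + d - b = M *ᵥ a - b + d by abel]
  · by_contra hbΩ
    exact hb (by simp [hvanish b hbΩ])

lemma Matrix.inv_mulVec_mem_of_mulVec_mem {ι K : Type*} [Fintype ι] [DecidableEq ι] [Field K]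
    {A : Matrix ι ι K} (hA : IsUnit A.det) {J : Submodule K (ι → K)}
    (hJ : ∀ x ∈ J, A *ᵥ x ∈ J) {x : ι → K} (hx : x ∈ J) : A⁻¹ *ᵥ x ∈ J := by
  have hinj : Function.Injective (A.mulVecLin.restrict hJ) := fun y z h =>
    Subtype.ext (Matrix.mulVec_injective_iff_isUnit.mpr ((A.isUnit_iff_isUnit_det).mpr hA)
      (congrArg Subtype.val h))
  obtain ⟨y, hy⟩ := LinearMap.injective_iff_surjective.mp hinj ⟨x, hx⟩
  have hAy : A *ᵥ y = x := congrArg Subtype.val hy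
  rw [← hAy, Matrix.mulVec_mulVec, Matrix.nonsing_inv_mul _ hA, Matrix.one_mulVec]
  exact y.2

theorem statement7_general
    {s : ℕ}
    (M : Matrix (Fin s) (Fin s) ℤ)
    (hMexp : ∀ μ ∈ spectrum ℂ (M.map (fun a => (a : ℂ))), 1 < ‖μ‖)
    (D : Finset (Fin s → ℤ)) (hD0 : (0 : Fin s → ℤ) ∈ D)
    (hDrep : ∀ x : Fin s → ℤ, ∃! d, d ∈ D ∧ ∃ y : Fin s → ℤ, x = d + M.mulVec y)
    (hTile : volume (Gset s M D) = 1)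
    (c : (Fin s → ℤ) → ℝ) (hcfin : (Function.support c).Finite)
    (φ : (Fin s → ℝ) → ℝ) (hφc : HasCompactSupport φ)
    (hφeq : ∀ x, φ x = ∑ᶠ k : Fin s → ℤ,
      c k * φ ((M.map (Int.cast : ℤ → ℝ)).mulVec x - icast k))
    (Ω : Finset (Fin s → ℤ))
    (hΩcover : Kset s M c ⊆ ⋃ k ∈ Ω, (fun g => icast k + g) '' Gset s M D)
    (hcont : Continuous φ)
    (J : Submodule ℝ (Fin s → ℝ))
    (hJinv : ∀ x ∈ J, (M.map (Int.cast : ℤ → ℝ)).mulVecLin x ∈ J) :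
    ∀ d ∈ D, ∀ u ∈ Udiff s M D Ω φ J, (Tmat s M c Ω d).mulVecLin u ∈ Udiff s M D Ω φ J := by
  have hdet := isUnit_det_rmat (det_ne_zero_of_expansive hMexp)
  have hdet := isUnit_det_rmat (det_ne_zero_of_expansive hMexp)
  have hsum := summable_norm_inv_pow_rmat hMexp
  have hcov := exists_sub_icast_mem_Gset hdet hsum hD0 hDrep
  have hclosed := (isCompact_Gset hsum D).isClosed
  have hvanish : ∀ x ∈ Gset s M D, ∀ b ∉ Ω, φ (x + icast b) = 0 := fun x hx b hb =>
    apply_add_icast_eq_zero_of_notMem hcont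
      ((support_subset_Kset hdet hsum hcfin hφc hφeq).trans hΩcover)
      (Gset_subset_closure_interior hdet hsum
        (interior_nonempty_of_forall_exists_sub_icast_mem hclosed hcov))
      (fun m hm => volume_inter_sub_icast_eq_zero hclosed.measurableSet hTile hcov hm) hx hb
  intro d hd u hu
  have hT : ∀ x ∈ Gset s M D,
      Tmat s M c Ω d *ᵥ vvec s Ω φ x = vvec s Ω φ (invStep s (rmat M)⁻¹ d x) := fun x hx => by
    ext a
    rw [vvec, apply_invStep_add_icast_eq_sum hdet hφeq (hvanish x hx) a d, ← Finset.sum_coe_sort]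
    rfl
  refine (Submodule.span_le (p := (Udiff s M D Ω φ J).comap (Tmat s M c Ω d).mulVecLin)).mpr
    (fun _ hv => ?_) hu
  obtain ⟨x, hx, y, hy, hxy, rfl⟩ := hv
  rw [SetLike.mem_coe, Submodule.mem_comap, map_sub, Matrix.mulVecLin_apply,
    Matrix.mulVecLin_apply, hT x hx, hT y hy]
  refine Submodule.subset_span
    ⟨_, invStep_mem_Gset hsum hd hx, _, invStep_mem_Gset hsum hd hy, ?_, rfl⟩
  rw [invStep_sub_invStep]
  exact Matrix.inv_mulVec_mem_of_mulVec_mem hdet hJinv hxy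

theorem statement7
    {s : ℕ} (hs : 1 ≤ s)
    (M : Matrix (Fin s) (Fin s) ℤ)
    (hMexp : ∀ μ ∈ spectrum ℂ (M.map (fun a => (a : ℂ))), 1 < ‖μ‖)
    (D : Finset (Fin s → ℤ)) (hD0 : (0 : Fin s → ℤ) ∈ D)
    (hDrep : ∀ x : Fin s → ℤ, ∃! d, d ∈ D ∧ ∃ y : Fin s → ℤ, x = d + M.mulVec y)
    (hTile : volume (Gset s M D) = 1)
    (c : (Fin s → ℤ) → ℝ) (hcfin : (Function.support c).Finite)
    (hsumrules : ∀ d ∈ D, ∑ᶠ k : Fin s → ℤ, c (M.mulVec k - d) = 1)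
    (φ : (Fin s → ℝ) → ℝ) (hφc : HasCompactSupport φ)
    (hφeq : ∀ x, φ x = ∑ᶠ k : Fin s → ℤ,
      c k * φ ((M.map (Int.cast : ℤ → ℝ)).mulVec x - icast k))
    (hφint : ∫ x, φ x = 1)
    (Ω : Finset (Fin s → ℤ))
    (hΩcover : Kset s M c ⊆ ⋃ k ∈ Ω, (fun g => icast k + g) '' Gset s M D)
    (hΩmin : ∀ Ω' : Finset (Fin s → ℤ),
      Kset s M c ⊆ (⋃ k ∈ Ω', (fun g => icast k + g) '' Gset s M D) → Ω.card ≤ Ω'.card)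
    (hcont : Continuous φ)
    (J : Submodule ℝ (Fin s → ℝ))
    (hJinv : ∀ x ∈ J, (M.map (Int.cast : ℤ → ℝ)).mulVecLin x ∈ J) :
    ∀ d ∈ D, ∀ u ∈ Udiff s M D Ω φ J, (Tmat s M c Ω d).mulVecLin u ∈ Udiff s M D Ω φ J :=
  statement7_general M hMexp D hD0 hDrep hTile c hcfin φ hφc hφeq Ω hΩcover hcont J hJinv

end
end

section
/- Assume that the segment [0,1] ⊂ ℝ is covered by ℓ distinct closed sets F_1, …, F_ℓ. Then there exist ℓ+1 points 0 = a_0 ≤ a_1 ≤ ⋯ ≤ a_ℓ = 1 such that for each i = 0, …, ℓ−1 the two points a_i and a_{i+1} belong to one and the same set F_j. -/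
open Filter MeasureTheory Matrix Set

noncomputable section

/-!
Induct on the number of sets. Choose `F j ∋ s` and let `b` be the largest point of
`F j ∩ [s, u]`. If `b < u`, then `(b, u]` misses `F j`, so its closure `[b, u]` is covered by the
remaining closed sets and induction gives a chain from `b` to `u` through them; prefixing `s`
(linked to `b` by `F j`) gives the chain from `s`. If `b = u`, the constant chain at `u`, linked
by `F j`, serves as the tail.
-/

section

variable {α : Type*} [ConditionallyCompleteLinearOrder α] [TopologicalSpace α] [OrderTopology α]
  [DenselyOrdered α]

theorem Icc_subset_iUnion_ne_of_isGreatest {ι : Type*} [Finite ι] {F : ι → Set α}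
    (hclosed : ∀ i, IsClosed (F i)) {s u b : α} (hcover : Icc s u ⊆ ⋃ i, F i) {j : ι}
    (hb : IsGreatest (F j ∩ Icc s u) b) (hbu : b < u) :
    Icc b u ⊆ ⋃ (i) (_ : i ≠ j), F i := by
  have hIoc : Ioc b u ⊆ ⋃ (i) (_ : i ≠ j), F i := by
    intro t ht
    have hts : t ∈ Icc s u := ⟨hb.1.2.1.trans ht.1.le, ht.2⟩
    obtain ⟨i, hti⟩ := mem_iUnion.1 (hcover hts)
    refine mem_iUnion₂.2 ⟨i, fun hij => ?_, hti⟩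
    subst hij
    exact (hb.2 ⟨hti, hts⟩).not_gt ht.1
  rw [← closure_Ioc hbu.ne]
  exact closure_minimal hIoc (isClosed_iUnion_of_finite fun i => isClosed_iUnion_of_finite
    fun _ => hclosed i)

theorem exists_monotone_chain_of_Icc_subset_iUnion :
    ∀ (n : ℕ) (F : Fin n → Set α), (∀ i, IsClosed (F i)) → ∀ {s u : α}, s ≤ u →
      Icc s u ⊆ ⋃ i, F i →
      ∃ a : Fin (n + 1) → α, a 0 = s ∧ a (Fin.last n) = u ∧ Monotone a ∧
        ∀ i : Fin n, ∃ j, a i.castSucc ∈ F j ∧ a i.succ ∈ F j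
  | 0, F, _, s, u, hsu, hcover => by
    simpa using hcover ⟨le_rfl, hsu⟩
  | n + 1, F, hclosed, s, u, hsu, hcover => by
    obtain ⟨j, hsj⟩ := mem_iUnion.1 (hcover ⟨le_rfl, hsu⟩)
    obtain ⟨b, hb⟩ := (isCompact_Icc.inter_left (hclosed j)).exists_isGreatest
      ⟨s, hsj, le_rfl, hsu⟩
    obtain ⟨hbj, hsb, hbu⟩ := hb.1
    have htail : ∃ a : Fin (n + 1) → α, a 0 = b ∧ a (Fin.last n) = u ∧ Monotone a ∧
        ∀ i : Fin n, ∃ k, a i.castSucc ∈ F k ∧ a i.succ ∈ F k := by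
      rcases hbu.eq_or_lt with rfl | hbu
      · exact ⟨fun _ => b, rfl, rfl, monotone_const, fun _ => ⟨j, hbj, hbj⟩⟩
      have hcover' : Icc b u ⊆ ⋃ i, F (j.succAbove i) := by
        refine (Icc_subset_iUnion_ne_of_isGreatest hclosed hcover hb hbu).trans ?_
        simp only [iUnion_subset_iff]
        intro i hij
        obtain ⟨i', rfl⟩ := Fin.exists_succAbove_eq hij
        exact subset_iUnion_of_subset i' subset_rfl
      obtain ⟨a, ha0, hau, hmono, hstep⟩ := exists_monotone_chain_of_Icc_subset_iUnion n
        (F ∘ j.succAbove) (fun _ => hclosed _) hbu.le hcover'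
      refine ⟨a, ha0, hau, hmono, fun i => ?_⟩
      obtain ⟨k, hk⟩ := hstep i
      exact ⟨j.succAbove k, hk⟩
    obtain ⟨a, ha0, hau, hmono, hstep⟩ := htail
    refine ⟨Fin.cons s a, rfl, by simpa using hau, ?_, ?_⟩
    · rw [Fin.monotone_iff_le_succ]
      refine Fin.cases ?_ fun i => ?_
      · simpa [ha0] using hsb
      · simpa using hmono i.castSucc_le_succ
    · refine Fin.cases ?_ fun i => ?_
      · exact ⟨j, hsj, by simpa [ha0] using hbj⟩
      · simpa using hstep i

end

theorem statement10_general
    (ℓ : ℕ) (F : Fin ℓ → Set ℝ) (hclosed : ∀ i, IsClosed (F i))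
    (hcover : Set.Icc (0 : ℝ) 1 ⊆ ⋃ i, F i) :
    ∃ a : Fin (ℓ + 1) → ℝ, a 0 = 0 ∧ a (Fin.last ℓ) = 1 ∧ Monotone a ∧
      ∀ i : Fin ℓ, ∃ j, a i.castSucc ∈ F j ∧ a i.succ ∈ F j :=
  exists_monotone_chain_of_Icc_subset_iUnion ℓ F hclosed zero_le_one hcover

theorem statement10
    (ℓ : ℕ) (F : Fin ℓ → Set ℝ) (hclosed : ∀ i, IsClosed (F i))
    (hdist : Function.Injective F)
    (hcover : Set.Icc (0 : ℝ) 1 ⊆ ⋃ i, F i) :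
    ∃ a : Fin (ℓ + 1) → ℝ, a 0 = 0 ∧ a (Fin.last ℓ) = 1 ∧ Monotone a ∧
      ∀ i : Fin ℓ, ∃ j, a i.castSucc ∈ F j ∧ a i.succ ∈ F j :=
  statement10_general ℓ F hclosed hcover

end
end
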